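/- arXiv:1212.4610 — 6 statements merged into one kernel-verified Lean document; each statement's English description precedes it below -/
import Mathlib

section
/- Let a, b, c, d be n×n complex matrices with the block matrix [[a,b],[c,d]] in Sp(2n,ℂ), and let T be a symmetric n×n complex matrix. Then a - (aT+b)(cT+d)⁻¹c = ((cT+d)ᵗ)⁻¹ whenever cT+d is invertible. -/
open Matrix

/-- The standard symplectic structure matrix J = [[0,I],[-I,0]]. -/
noncomputable def sympJ (n : ℕ) (R : Type*) [CommRing R] :
    Matrix (Fin n ⊕ Fin n) (Fin n ⊕ Fin n) R :=
  Matrix.fromBlocks 0 1 (-1) 0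

/-- For [[a,b],[c,d]] ∈ Sp(2n,ℂ) and T symmetric with cT+d invertible,
`a - (aT+b)(cT+d)⁻¹c = ((cT+d)ᵗ)⁻¹`. -/
theorem stmt0 (n : ℕ) (a b c d T : Matrix (Fin n) (Fin n) ℂ)
    (hg : Matrix.fromBlocks a b c d * sympJ n ℂ * (Matrix.fromBlocks a b c d)ᵀ = sympJ n ℂ)
    (hT : Tᵀ = T) (hinv : IsUnit (c * T + d)) :
    a - (a * T + b) * (c * T + d)⁻¹ * c = ((c * T + d)ᵀ)⁻¹ := by
  simp only [sympJ, Matrix.fromBlocks_transpose, Matrix.fromBlocks_multiply,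
    Matrix.mul_zero, Matrix.zero_mul, Matrix.mul_one, Matrix.mul_neg, Matrix.neg_mul,
    mul_zero, zero_mul, mul_one, mul_neg, neg_mul, add_zero, zero_add, Matrix.mul_one] at hg
  have h01 := congrArg (fun M => M.toBlocks₁₂) hg
  have h11 := congrArg (fun M => M.toBlocks₂₂) hg
  simp only [Matrix.toBlocks_fromBlocks₁₂, Matrix.toBlocks_fromBlocks₂₂] at h01 h11
  have hs1 : a * dᵀ - b * cᵀ = 1 := by rw [neg_add_eq_sub] at h01; exact h01
  have hs2 : c * dᵀ = d * cᵀ := by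
    rw [neg_add_eq_sub, sub_eq_zero] at h11; exact h11
  have hdet : IsUnit (c * T + d).det := (Matrix.isUnit_iff_isUnit_det _).mp hinv
  have hinvmul : (c * T + d)⁻¹ * (c * T + d) = 1 := Matrix.nonsing_inv_mul _ hdet
  have hc : (c * T + d) * cᵀ = c * (T * cᵀ + dᵀ) := by
    rw [add_mul, mul_add, hs2]; noncomm_ring
  have key : (a - (a * T + b) * (c * T + d)⁻¹ * c) * (c * T + d)ᵀ = 1 := by
    have ht : (c * T + d)ᵀ = T * cᵀ + dᵀ := by
      rw [Matrix.transpose_add, Matrix.transpose_mul, hT]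
    rw [ht, sub_mul]
    have h2 : (a * T + b) * (c * T + d)⁻¹ * c * (T * cᵀ + dᵀ) = (a * T + b) * cᵀ := by
      rw [mul_assoc ((a * T + b) * (c * T + d)⁻¹), ← hc, ← mul_assoc, mul_assoc (a * T + b),
        hinvmul, mul_one]
    rw [h2]
    have h3 : a * (T * cᵀ + dᵀ) - (a * T + b) * cᵀ = a * dᵀ - b * cᵀ := by noncomm_ring
    rw [h3, hs1]
  exact (Matrix.inv_eq_left_inv key).symm
end

section
/- Let S be a symmetric unitary n×n complex matrix (S = Sᵗ, S·S* = I) with I+iS invertible. Then T = (S+i·I)(iS+I)⁻¹ is symmetric with real entries, i.e. T = conj T and T = Tᵗ. -/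
open Matrix

lemma inv_comm_aux {n : ℕ} (A B : Matrix (Fin n) (Fin n) ℂ) (hA : IsUnit A)
    (h : A * B = B * A) : A⁻¹ * B = B * A⁻¹ := by
  have hd : IsUnit A.det := (Matrix.isUnit_iff_isUnit_det A).mp hA
  calc A⁻¹ * B = A⁻¹ * B * (A * A⁻¹) := by rw [Matrix.mul_nonsing_inv A hd, mul_one]
    _ = A⁻¹ * (B * A) * A⁻¹ := by noncomm_ring
    _ = A⁻¹ * (A * B) * A⁻¹ := by rw [h]
    _ = (A⁻¹ * A) * (B * A⁻¹) := by noncomm_ring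
    _ = B * A⁻¹ := by rw [Matrix.nonsing_inv_mul A hd, one_mul]

lemma map_conj_eq {n : ℕ} (M : Matrix (Fin n) (Fin n) ℂ) :
    M.map (starRingEnd ℂ) = Mᵀᴴ := by
  ext i j
  rfl

/-- Cayley transform: if S is symmetric unitary with I + iS invertible, then
T = (S + i·I)(iS + I)⁻¹ has real entries and is symmetric. -/
theorem stmt5 (n : ℕ) (S : Matrix (Fin n) (Fin n) ℂ)
    (hsymm : Sᵀ = S) (hunit : S * Sᴴ = 1)
    (hinv : IsUnit (Complex.I • S + 1)) :
    ((S + Complex.I • 1) * (Complex.I • S + 1)⁻¹).map (starRingEnd ℂ) =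
        (S + Complex.I • 1) * (Complex.I • S + 1)⁻¹ ∧
      ((S + Complex.I • 1) * (Complex.I • S + 1)⁻¹)ᵀ =
        (S + Complex.I • 1) * (Complex.I • S + 1)⁻¹ := by
  set A := Complex.I • S + 1 with hA
  set B := S + Complex.I • 1 with hB
  have hSd : IsUnit S.det := IsUnit.of_mul_eq_one (a := S.det) Sᴴ.det
    (by rw [← Matrix.det_mul, hunit, Matrix.det_one])
  have hAd : IsUnit A.det := (Matrix.isUnit_iff_isUnit_det A).mp hinv
  have hSH : Sᴴ = S⁻¹ := (Matrix.inv_eq_right_inv hunit).symm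
  have key : S⁻¹ * S = 1 := Matrix.nonsing_inv_mul S hSd
  -- commutation facts
  have hABcomm : A * B = B * A := by
    simp only [hA, hB, add_mul, mul_add, Matrix.smul_mul, Matrix.mul_smul, one_mul, mul_one]
    abel
  have hSAcomm : S * A = A * S := by
    simp only [hA, add_mul, mul_add, Matrix.smul_mul, Matrix.mul_smul, one_mul, mul_one]
  have hSBcomm : S * B = B * S := by
    simp only [hB, add_mul, mul_add, Matrix.smul_mul, Matrix.mul_smul, one_mul, mul_one]
  have hBAinv : A⁻¹ * B = B * A⁻¹ := inv_comm_aux A B hinv hABcomm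
  have hSAinv : A⁻¹ * S = S * A⁻¹ := inv_comm_aux A S hinv hSAcomm.symm
  have hAT : Aᵀ = A := by
    simp [hA, Matrix.transpose_add, Matrix.transpose_smul, hsymm]
  have hBT : Bᵀ = B := by
    simp [hB, Matrix.transpose_add, Matrix.transpose_smul, hsymm]
  constructor
  · -- real entries
    have hconjS : S.map (starRingEnd ℂ) = S⁻¹ := by
      rw [map_conj_eq, hsymm, hSH]
    have hconjA : A.map (starRingEnd ℂ) = S⁻¹ * ((-Complex.I) • A) := by
      rw [map_conj_eq, hAT, hA]
      simp only [Matrix.conjTranspose_add, Matrix.conjTranspose_smul, Matrix.conjTranspose_one,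
        hSH, Complex.star_def, Complex.conj_I, neg_smul, one_smul, mul_add, smul_add, Matrix.mul_smul, smul_smul, neg_mul,
        Complex.I_mul_I, neg_neg, one_smul, mul_one, key]
      simp only [mul_neg, Matrix.mul_smul, mul_one, key]
      abel
    have hconjB : B.map (starRingEnd ℂ) = S⁻¹ * ((-Complex.I) • B) := by
      rw [map_conj_eq, hBT, hB]
      simp only [Matrix.conjTranspose_add, Matrix.conjTranspose_smul, Matrix.conjTranspose_one,
        hSH, Complex.star_def, Complex.conj_I, neg_smul, one_smul, mul_add, smul_add, Matrix.mul_smul, smul_smul, neg_mul,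
        Complex.I_mul_I, neg_neg, one_smul, mul_one, key]
      simp only [mul_neg, Matrix.mul_smul, mul_one, key]
      abel
    have hIunit : Invertible (-Complex.I) := by
      refine ⟨Complex.I, ?_, ?_⟩ <;> simp [Complex.I_mul_I]
    rw [Matrix.map_mul]
    rw [show (A⁻¹).map (starRingEnd ℂ) = (A.map (starRingEnd ℂ))⁻¹ by
      rw [map_conj_eq, map_conj_eq, Matrix.transpose_nonsing_inv,
        Matrix.conjTranspose_nonsing_inv]]
    rw [hconjA, hconjB, Matrix.mul_inv_rev]
    rw [Matrix.inv_smul (A := A) (k := -Complex.I) hAd, Matrix.nonsing_inv_nonsing_inv S hSd]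
    have hinvI : ⅟ (-Complex.I) = Complex.I := by
      have : (-Complex.I) * Complex.I = 1 := by simp [Complex.I_mul_I]
      exact invOf_eq_right_inv this
    rw [hinvI]
    calc S⁻¹ * ((-Complex.I) • B) * (Complex.I • A⁻¹ * S)
        = S⁻¹ * (B * (S * A⁻¹)) := by
          simp only [Matrix.smul_mul, Matrix.mul_smul, smul_smul, mul_assoc, hSAinv]
          rw [mul_neg, Complex.I_mul_I, neg_neg, one_smul]
      _ = (S⁻¹ * (B * S)) * A⁻¹ := by noncomm_ring
      _ = ((S⁻¹ * S) * B) * A⁻¹ := by rw [← hSBcomm]; noncomm_ring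
      _ = B * A⁻¹ := by rw [key, one_mul]
  · -- symmetric
    rw [Matrix.transpose_mul, Matrix.transpose_nonsing_inv, hAT, hBT, hBAinv]
end

section
/- Let g = [[a,b,r],[c,d,s],[0,0,1]] be an affine symplectic matrix (with [[a,b],[c,d]] ∈ Sp(2n,ℝ)), T ∈ Symm(n,ℝ), τ ∈ ℝⁿ, with cT+d invertible. Then the image under g of the affine subspace {(Ty+τ, y) : y ∈ ℝⁿ} equals the affine subspace {(T'y+τ', y) : y ∈ ℝⁿ} where T' = (aT+b)(cT+d)⁻¹ and τ' = aτ + r - (aT+b)(cT+d)⁻¹(cτ+s). -/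
open Matrix

/-- The image under the affine symplectic map (x,y) ↦ (ax+by+r, cx+dy+s) of the
affine Lagrangian graph {(Ty+τ, y)} is the graph of
(T',τ') = ((aT+b)(cT+d)⁻¹, aτ+r-(aT+b)(cT+d)⁻¹(cτ+s)). -/
theorem stmt6 (n : ℕ) (a b c d T : Matrix (Fin n) (Fin n) ℝ) (r s τ : Fin n → ℝ)
    (hg : Matrix.fromBlocks a b c d * sympJ n ℝ * (Matrix.fromBlocks a b c d)ᵀ = sympJ n ℝ)
    (hT : Tᵀ = T) (hinv : IsUnit (c * T + d)) :
    (fun p : (Fin n → ℝ) × (Fin n → ℝ) =>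
        (a.mulVec p.1 + b.mulVec p.2 + r, c.mulVec p.1 + d.mulVec p.2 + s)) ''
      {p : (Fin n → ℝ) × (Fin n → ℝ) | ∃ y, p = (T.mulVec y + τ, y)} =
    {p : (Fin n → ℝ) × (Fin n → ℝ) | ∃ y,
      p = (((a * T + b) * (c * T + d)⁻¹).mulVec y +
            (a.mulVec τ + r - ((a * T + b) * (c * T + d)⁻¹).mulVec (c.mulVec τ + s)), y)} := by
  have hdet : IsUnit (c * T + d).det := (Matrix.isUnit_iff_isUnit_det _).mp hinv
  have hinvmul : (c * T + d)⁻¹ * (c * T + d) = 1 := Matrix.nonsing_inv_mul _ hdet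
  have hmulinv : (c * T + d) * (c * T + d)⁻¹ = 1 := Matrix.mul_nonsing_inv _ hdet
  set M := c * T + d with hM
  set N := a * T + b with hN
  have h1 : ∀ y : Fin n → ℝ, a.mulVec (T.mulVec y + τ) + b.mulVec y + r
      = N.mulVec y + a.mulVec τ + r := by
    intro y
    simp only [hN, Matrix.add_mulVec, Matrix.mulVec_add, ← Matrix.mulVec_mulVec]
    abel
  have h2 : ∀ y : Fin n → ℝ, c.mulVec (T.mulVec y + τ) + d.mulVec y + s
      = M.mulVec y + (c.mulVec τ + s) := by
    intro y
    simp only [hM, Matrix.add_mulVec, Matrix.mulVec_add, ← Matrix.mulVec_mulVec]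
    abel
  ext p
  simp only [Set.mem_image, Set.mem_setOf_eq]
  constructor
  · rintro ⟨q, ⟨y, rfl⟩, rfl⟩
    refine ⟨M.mulVec y + (c.mulVec τ + s), ?_⟩
    have key : (N * M⁻¹).mulVec (M.mulVec y + (c.mulVec τ + s))
        = N.mulVec y + (N * M⁻¹).mulVec (c.mulVec τ + s) := by
      rw [Matrix.mulVec_add, Matrix.mulVec_mulVec, Matrix.mul_assoc, hinvmul, Matrix.mul_one]
    simp only [h1, h2, key, Prod.mk.injEq, and_true]
    abel
  · rintro ⟨y, rfl⟩
    refine ⟨(T.mulVec (M⁻¹.mulVec (y - (c.mulVec τ + s))) + τ,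
      M⁻¹.mulVec (y - (c.mulVec τ + s))), ⟨_, rfl⟩, ?_⟩
    have hy : M.mulVec (M⁻¹.mulVec (y - (c.mulVec τ + s))) = y - (c.mulVec τ + s) := by
      rw [Matrix.mulVec_mulVec, hmulinv, Matrix.one_mulVec]
    have hny : N.mulVec (M⁻¹.mulVec (y - (c.mulVec τ + s)))
        = (N * M⁻¹).mulVec y - (N * M⁻¹).mulVec (c.mulVec τ + s) := by
      rw [Matrix.mulVec_mulVec, ← Matrix.mulVec_sub]
    simp only [h1, h2, hy, hny, Prod.mk.injEq]
    constructor
    · abel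
    · abel
end

section
/- For f a Schwartz function on ℝ²ⁿ = ℝⁿ × ℝⁿ, define Rf(T,τ) = ∫_{ℝⁿ} f(Ty+τ, y) dy for T ∈ Symm(n,ℝ), τ ∈ ℝⁿ. Then for any g = [[a,b],[c,d]] ∈ Sp(2n,ℝ), r,s ∈ ℝⁿ, and (T,τ) with cT+d invertible, one has ∫_{ℝⁿ} f(a(Ty+τ)+by+r, c(Ty+τ)+dy+s) dy = Rf((aT+b)(cT+d)⁻¹, aτ+r-(aT+b)(cT+d)⁻¹(cτ+s)) · |det(cT+d)|⁻¹. -/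
open Matrix MeasureTheory

lemma integral_comp_affine {n : ℕ} (M : Matrix (Fin n) (Fin n) ℝ) (hM : IsUnit M)
    (w : Fin n → ℝ) (g : (Fin n → ℝ) → ℂ) (hg : Continuous g) :
    (∫ y : Fin n → ℝ, g (M.mulVec y + w)) = |M.det|⁻¹ • ∫ z : Fin n → ℝ, g z := by
  have hdet : M.det ≠ 0 := by
    simpa using (Matrix.isUnit_iff_isUnit_det M).1 hM |>.ne_zero
  have hdetlin : LinearMap.det M.mulVecLin = M.det := by
    have : M.mulVecLin = Matrix.toLin' M := rfl
    rw [this, LinearMap.det_toLin']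
  have hmap : Measure.map M.mulVecLin (volume : Measure (Fin n → ℝ)) =
      ENNReal.ofReal |(LinearMap.det M.mulVecLin)⁻¹| • volume := by
    exact Measure.map_linearMap_addHaar_eq_smul_addHaar volume (by rw [hdetlin]; exact hdet)
  have h1 : (∫ z : Fin n → ℝ, g (z + w) ∂(Measure.map M.mulVecLin volume)) =
      ∫ y : Fin n → ℝ, g (M.mulVec y + w) :=
    integral_map (M.mulVecLin.continuous_of_finiteDimensional).aemeasurable
      ((hg.comp (continuous_id.add continuous_const)).aestronglyMeasurable)
  rw [← h1, hmap, hdetlin, integral_smul_measure, ENNReal.toReal_ofReal (abs_nonneg _),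
    abs_inv, integral_add_right_eq_self]

/-- Transformation rule of the flat Lagrangian Radon transform
`Rf(T,τ) = ∫ f(Ty+τ, y) dy` under the affine symplectic group:
∫ f(a(Ty+τ)+by+r, c(Ty+τ)+dy+s) dy
  = Rf((aT+b)(cT+d)⁻¹, aτ+r-(aT+b)(cT+d)⁻¹(cτ+s)) · |det(cT+d)|⁻¹. -/
theorem stmt8 (n : ℕ) (f : SchwartzMap ((Fin n → ℝ) × (Fin n → ℝ)) ℂ)
    (a b c d T : Matrix (Fin n) (Fin n) ℝ) (r s τ : Fin n → ℝ)
    (hg : Matrix.fromBlocks a b c d * sympJ n ℝ * (Matrix.fromBlocks a b c d)ᵀ = sympJ n ℝ)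
    (hT : Tᵀ = T) (hinv : IsUnit (c * T + d)) :
    (∫ y : Fin n → ℝ,
        f (a.mulVec (T.mulVec y + τ) + b.mulVec y + r,
           c.mulVec (T.mulVec y + τ) + d.mulVec y + s)) =
      (∫ y : Fin n → ℝ,
        f (((a * T + b) * (c * T + d)⁻¹).mulVec y +
             (a.mulVec τ + r - ((a * T + b) * (c * T + d)⁻¹).mulVec (c.mulVec τ + s)), y)) *
        (|(c * T + d).det|⁻¹ : ℝ) := by
  set M := c * T + d with hM
  set N := (a * T + b) * M⁻¹ with hN
  set w := c.mulVec τ + s with hw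
  set v := a.mulVec τ + r - N.mulVec w with hv
  have hdetu : IsUnit M.det := (Matrix.isUnit_iff_isUnit_det M).1 hinv
  have hNM : N * M = a * T + b := Matrix.nonsing_inv_mul_cancel_right _ _ hdetu
  have key : ∀ y : Fin n → ℝ,
      (a.mulVec (T.mulVec y + τ) + b.mulVec y + r,
        c.mulVec (T.mulVec y + τ) + d.mulVec y + s) =
      (N.mulVec (M.mulVec y + w) + v, M.mulVec y + w) := by
    intro y
    have h2 : c.mulVec (T.mulVec y + τ) + d.mulVec y + s = M.mulVec y + w := by
      simp only [hM, hw, Matrix.mulVec_add, Matrix.add_mulVec, Matrix.mulVec_mulVec]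
      abel
    have h1 : N.mulVec (M.mulVec y + w) + v = a.mulVec (T.mulVec y + τ) + b.mulVec y + r := by
      have e1 : (a * T).mulVec y = a.mulVec (T.mulVec y) := (Matrix.mulVec_mulVec y a T).symm
      rw [hv, Matrix.mulVec_add, Matrix.mulVec_mulVec, hNM, Matrix.add_mulVec, e1]
      simp only [Matrix.mulVec_add]
      abel
    exact Prod.ext h1.symm h2
  simp only [key]
  have := integral_comp_affine M hinv w (fun z => f (N.mulVec z + v, z))
    (f.continuous.comp (by continuity))
  rw [this, Complex.real_smul, mul_comm]
end

section
/- A real symmetric (n+1)×(n+1) matrix of the form [[X,ξ],[ξᵗ,0]] (X ∈ Symm(n,ℝ), ξ ∈ ℝⁿ) has rank ≤ 2 with ξ ≠ 0 if and only if there exist y, z ∈ ℝⁿ with z ≠ 0 such that X = yzᵗ + zyᵗ and ξ = z. -/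
open Matrix Submodule Module

/-- The bordered symmetric matrix [[X,ξ],[ξᵗ,0]] with ξ ≠ 0 has rank ≤ 2 iff
X = yzᵗ + zyᵗ and ξ = z for some y, z with z ≠ 0. -/
theorem stmt14 (n : ℕ) (X : Matrix (Fin n) (Fin n) ℝ) (ξ : Fin n → ℝ)
    (hsymm : Xᵀ = X) :
    ((Matrix.fromBlocks X (Matrix.of fun i (_ : Unit) => ξ i)
        (Matrix.of fun (_ : Unit) j => ξ j) 0).rank ≤ 2 ∧ ξ ≠ 0) ↔
      ∃ y z : Fin n → ℝ, z ≠ 0 ∧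
        X = Matrix.vecMulVec y z + Matrix.vecMulVec z y ∧ ξ = z := by
  set M := Matrix.fromBlocks X (Matrix.of fun i (_ : Unit) => ξ i)
      (Matrix.of fun (_ : Unit) j => ξ j) (0 : Matrix Unit Unit ℝ) with hMdef
  constructor
  · rintro ⟨hrank, hξ⟩
    obtain ⟨j₀, hj₀⟩ : ∃ j, ξ j ≠ 0 := by
      by_contra h; push_neg at h; exact hξ (funext h)
    set v : (Fin n ⊕ Unit) → ℝ := fun k => M k (Sum.inr ()) with hv
    set c : (Fin n ⊕ Unit) → ℝ := fun k => M k (Sum.inl j₀) with hc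
    have hvmem : v ∈ LinearMap.range M.mulVecLin :=
      ⟨Pi.single (Sum.inr ()) 1, by simp [Matrix.mulVecLin_apply, Matrix.mulVec_single_one]; rfl⟩
    have hcmem : c ∈ LinearMap.range M.mulVecLin :=
      ⟨Pi.single (Sum.inl j₀) 1, by simp [Matrix.mulVecLin_apply, Matrix.mulVec_single_one]; rfl⟩
    have hli : LinearIndependent ℝ ![v, c] := by
      rw [LinearIndependent.pair_iff]
      intro s t hst
      have h1 := congrFun hst (Sum.inr ())
      simp [hv, hc, hMdef] at h1
      have ht : t = 0 := h1.resolve_right hj₀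
      subst ht
      have h2 := congrFun hst (Sum.inl j₀)
      simp [hv, hc, hMdef] at h2
      exact ⟨h2.resolve_right hj₀, rfl⟩
    have hrangeset : Set.range ![v, c] = {v, c} := by
      ext x; simp [Fin.exists_fin_two, eq_comm]; tauto
    have hspan : span ℝ ({v, c} : Set ((Fin n ⊕ Unit) → ℝ)) = LinearMap.range M.mulVecLin := by
      apply Submodule.eq_of_le_of_finrank_le
      · rw [Submodule.span_le]
        rintro x (rfl | rfl)
        · exact hvmem
        · exact hcmem
      · have h2 : finrank ℝ (span ℝ ({v, c} : Set ((Fin n ⊕ Unit) → ℝ))) = 2 := by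
          rw [← hrangeset, finrank_span_eq_card hli, Fintype.card_fin]
        rw [h2]
        exact hrank
    have key : ∀ j, ∃ a b : ℝ, (∀ i, a * ξ i + b * X i j₀ = X i j) ∧ b * ξ j₀ = ξ j := by
      intro j
      have hmem : (fun k => M k (Sum.inl j)) ∈ LinearMap.range M.mulVecLin :=
        ⟨Pi.single (Sum.inl j) 1, by simp [Matrix.mulVecLin_apply, Matrix.mulVec_single_one]; rfl⟩
      rw [← hspan, Submodule.mem_span_pair] at hmem
      obtain ⟨a, b, hab⟩ := hmem
      refine ⟨a, b, fun i => ?_, ?_⟩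
      · have := congrFun hab (Sum.inl i)
        simpa [hv, hc, hMdef, Matrix.fromBlocks] using this
      · have := congrFun hab (Sum.inr ())
        simpa [hv, hc, hMdef, Matrix.fromBlocks] using this
    choose a b hab hb using key
    refine ⟨fun i => (a i + X i j₀ / ξ j₀) / 2, ξ, hξ, ?_, rfl⟩
    ext i j
    have h1 := hab j i
    have h2 := hab i j
    have hXs : X j i = X i j := by
      have := congrFun (congrFun hsymm i) j
      rwa [Matrix.transpose_apply] at this
    have hb1 := hb i
    have hb2 := hb j
    simp only [Matrix.add_apply, Matrix.vecMulVec_apply]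
    field_simp
    linear_combination (-(ξ j₀)) * h1 + (-(ξ j₀)) * h2 + (-(ξ j₀)) * hXs +
      X i j₀ * hb2 + X j j₀ * hb1
  · rintro ⟨y, z, hz, hX, rfl⟩
    refine ⟨?_, hz⟩
    set u : (Fin n ⊕ Unit) → ℝ := Sum.elim y (fun _ => 1) with hu
    set w : (Fin n ⊕ Unit) → ℝ := Sum.elim ξ (fun _ => 0) with hw
    have hM : M = Matrix.vecMulVec u w + Matrix.vecMulVec w u := by
      ext (i | i) (j | j) <;>
        simp [hMdef, hX, Matrix.vecMulVec_apply, hu, hw]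
    have hrange : LinearMap.range M.mulVecLin ≤ span ℝ ({u, w} : Set ((Fin n ⊕ Unit) → ℝ)) := by
      rintro _ ⟨x, rfl⟩
      rw [Submodule.mem_span_pair]
      refine ⟨w ⬝ᵥ x, u ⬝ᵥ x, ?_⟩
      funext k
      simp only [Matrix.mulVecLin_apply, hM, Pi.add_apply, Pi.smul_apply, smul_eq_mul,
        Matrix.mulVec, Matrix.add_apply, Matrix.vecMulVec_apply, dotProduct,
        Matrix.add_mul, Finset.sum_add_distrib]
      rw [Finset.sum_mul, Finset.sum_mul, ← Finset.sum_add_distrib]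
      exact Finset.sum_congr rfl fun l _ => by ring
    calc M.rank = finrank ℝ (LinearMap.range M.mulVecLin) := rfl
      _ ≤ finrank ℝ (span ℝ ({u, w} : Set ((Fin n ⊕ Unit) → ℝ))) := Submodule.finrank_mono hrange
      _ ≤ 2 := by
          have : ({u, w} : Set ((Fin n ⊕ Unit) → ℝ)) = Set.range ![u, w] := by
            ext x; simp [Fin.exists_fin_two, eq_comm]; tauto
          rw [this]
          exact (finrank_range_le_card (R := ℝ) ![u, w]).trans_eq (by simp)
end

section
/- Let X be a real symmetric n×n matrix of rank 2 that is positive or negative semidefinite, i.e. X = ±(aaᵗ+bbᵗ) with a,b ∈ ℝⁿ linearly independent, and let ξ ∈ ℝⁿ. If the (n+1)×(n+1) matrix [[X,ξ],[ξᵗ,0]] has rank at most 2, then ξ = 0. -/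
open Matrix

lemma stmt15_vmv (n : ℕ) (w v y : Fin n → ℝ) :
    Matrix.vecMulVec w v *ᵥ y = (v ⬝ᵥ y) • w := by
  funext i
  simp only [Matrix.mulVec, dotProduct, vecMulVec_apply, Pi.smul_apply,
    smul_eq_mul, Finset.sum_mul]
  exact Finset.sum_congr rfl fun j _ => by ring

lemma stmt15_aux (n : ℕ) (ξ a b : Fin n → ℝ) (ε : ℝ) (hε : ε = 1 ∨ ε = -1)
    (hab : LinearIndependent ℝ ![a, b])
    (hrank : (Matrix.fromBlocks (ε • (Matrix.vecMulVec a a + Matrix.vecMulVec b b))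
        (Matrix.of fun i (_ : Unit) => ξ i)
        (Matrix.of fun (_ : Unit) j => ξ j) 0).rank ≤ 2) :
    ξ = 0 := by
  by_contra hξ
  set X : Matrix (Fin n) (Fin n) ℝ := ε • (Matrix.vecMulVec a a + Matrix.vecMulVec b b) with hXdef
  set M := Matrix.fromBlocks X (Matrix.of fun i (_ : Unit) => ξ i)
      (Matrix.of fun (_ : Unit) j => ξ j) (0 : Matrix Unit Unit ℝ) with hMdef
  have hεne : ε ≠ 0 := by rcases hε with h | h <;> simp [h]
  -- mulVec of X
  have hXmul : ∀ y : Fin n → ℝ, X *ᵥ y = ε • ((a ⬝ᵥ y) • a + (b ⬝ᵥ y) • b) := by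
    intro y
    rw [hXdef, Matrix.smul_mulVec, Matrix.add_mulVec, stmt15_vmv, stmt15_vmv]
  -- the three vectors
  have hcol : ∀ (y : Fin n → ℝ) (t : ℝ),
      M *ᵥ Sum.elim y (fun _ => t) =
        Sum.elim (X *ᵥ y + t • ξ) (fun _ => ξ ⬝ᵥ y) := by
    intro y t
    funext i
    rw [hMdef, Matrix.fromBlocks_mulVec]
    cases i with
    | inl i => simp [Matrix.mulVec, dotProduct, mul_comm]
    | inr u => simp [Matrix.mulVec, dotProduct]
  set v : Fin 3 → (Fin n ⊕ Unit → ℝ) :=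
    ![M *ᵥ Sum.elim a (fun _ => 0), M *ᵥ Sum.elim b (fun _ => 0),
      M *ᵥ Sum.elim 0 (fun _ => 1)] with hvdef
  have hXzero : X *ᵥ (0 : Fin n → ℝ) = 0 := by simp
  have hv0 : v 0 = Sum.elim (X *ᵥ a) (fun _ => ξ ⬝ᵥ a) := by
    simp [hvdef, hcol a 0]
  have hv1 : v 1 = Sum.elim (X *ᵥ b) (fun _ => ξ ⬝ᵥ b) := by
    simp [hvdef, hcol b 0]
  have hv2 : v 2 = Sum.elim ξ (fun _ => 0) := by
    have := hcol 0 1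
    simp only [hvdef]
    rw [Matrix.cons_val_two]
    simp only [Matrix.tail_cons, Matrix.head_cons]
    rw [this, hXzero]
    simp
  -- linear independence
  have hli : LinearIndependent ℝ v := by
    rw [Fintype.linearIndependent_iff]
    intro g hg
    rw [Fin.sum_univ_three, hv0, hv1, hv2] at hg
    -- bottom equation
    have hB : g 0 * (ξ ⬝ᵥ a) + g 1 * (ξ ⬝ᵥ b) = 0 := by
      have := congrFun hg (Sum.inr ())
      simpa using this
    -- top equation
    have hT : g 0 • (X *ᵥ a) + g 1 • (X *ᵥ b) + g 2 • ξ = 0 := by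
      funext i
      have := congrFun hg (Sum.inl i)
      simpa using this
    set z : Fin n → ℝ := g 0 • a + g 1 • b with hzdef
    have hXz : X *ᵥ z = g 0 • (X *ᵥ a) + g 1 • (X *ᵥ b) := by
      rw [hzdef, Matrix.mulVec_add, Matrix.mulVec_smul, Matrix.mulVec_smul]
    have hT' : X *ᵥ z + g 2 • ξ = 0 := by rw [hXz]; exact hT
    have hξz : ξ ⬝ᵥ z = 0 := by
      rw [hzdef, dotProduct_add, dotProduct_smul, dotProduct_smul]
      simpa using hB
    -- (X z) ⬝ᵥ z = 0
    have hXzz : (X *ᵥ z) ⬝ᵥ z = 0 := by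
      have : X *ᵥ z = -(g 2 • ξ) := by linear_combination (norm := module) hT'
      rw [this, neg_dotProduct, smul_dotProduct, hξz]
      simp
    have hXzz' : (X *ᵥ z) ⬝ᵥ z = ε * ((a ⬝ᵥ z) ^ 2 + (b ⬝ᵥ z) ^ 2) := by
      rw [hXmul z]
      simp [smul_dotProduct, add_dotProduct, dotProduct_comm a z,
        dotProduct_comm b z]
      ring
    have hsq : (a ⬝ᵥ z) ^ 2 + (b ⬝ᵥ z) ^ 2 = 0 := by
      have := hXzz'.symm.trans hXzz
      exact (mul_eq_zero.mp this).resolve_left hεne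
    have haz : a ⬝ᵥ z = 0 := by nlinarith [sq_nonneg (a ⬝ᵥ z), sq_nonneg (b ⬝ᵥ z)]
    have hbz : b ⬝ᵥ z = 0 := by nlinarith [sq_nonneg (a ⬝ᵥ z), sq_nonneg (b ⬝ᵥ z)]
    have hzz : z ⬝ᵥ z = 0 := by
      rw [hzdef]
      rw [add_dotProduct, smul_dotProduct, smul_dotProduct]
      have ha' : a ⬝ᵥ z = a ⬝ᵥ (g 0 • a + g 1 • b) := by rw [hzdef]
      have hb' : b ⬝ᵥ z = b ⬝ᵥ (g 0 • a + g 1 • b) := by rw [hzdef]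
      rw [← hzdef] at *
      simp [haz, hbz]
    have hz0 : z = 0 := dotProduct_self_eq_zero.mp hzz
    have hg01 : g 0 = 0 ∧ g 1 = 0 := LinearIndependent.pair_iff.mp hab (g 0) (g 1) hz0
    have hg2 : g 2 = 0 := by
      have : g 2 • ξ = 0 := by
        have := hT'
        rw [hz0] at this
        simpa using this
      rcases smul_eq_zero.mp this with h | h
      · exact h
      · exact absurd h hξ
    intro i
    fin_cases i
    · exact hg01.1
    · exact hg01.2
    · exact hg2
  -- rank bound
  have hspan : Submodule.span ℝ (Set.range v) ≤ LinearMap.range M.mulVecLin := by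
    rw [Submodule.span_le]
    rintro x ⟨i, rfl⟩
    fin_cases i <;> exact ⟨_, rfl⟩
  have h3 : 3 ≤ M.rank := by
    have hfr : Module.finrank ℝ (Submodule.span ℝ (Set.range v)) = 3 := by
      rw [finrank_span_eq_card hli]; simp
    calc (3 : ℕ) = Module.finrank ℝ (Submodule.span ℝ (Set.range v)) := hfr.symm
      _ ≤ Module.finrank ℝ (LinearMap.range M.mulVecLin) := Submodule.finrank_mono hspan
      _ = M.rank := rfl
  omega

/-- If X = ±(aaᵗ + bbᵗ) with a, b linearly independent (so X is definite of
rank 2 on its column space) and the bordered matrix [[X,ξ],[ξᵗ,0]] has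
rank ≤ 2, then ξ = 0. -/
theorem stmt15 (n : ℕ) (X : Matrix (Fin n) (Fin n) ℝ) (ξ a b : Fin n → ℝ)
    (hab : LinearIndependent ℝ ![a, b])
    (hX : X = Matrix.vecMulVec a a + Matrix.vecMulVec b b ∨
          X = -(Matrix.vecMulVec a a + Matrix.vecMulVec b b))
    (hrank : (Matrix.fromBlocks X (Matrix.of fun i (_ : Unit) => ξ i)
        (Matrix.of fun (_ : Unit) j => ξ j) 0).rank ≤ 2) :
    ξ = 0 := by
  rcases hX with h | h
  · apply stmt15_aux n ξ a b 1 (Or.inl rfl) hab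
    rw [one_smul, ← h]; exact hrank
  · apply stmt15_aux n ξ a b (-1) (Or.inr rfl) hab
    rw [neg_one_smul, ← h]; exact hrank
end
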